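/- Let w be a positive integrable function on [0,1] and (β_Q) nonnegative scalars indexed by dyadic subcubes satisfying (1/w(K)) Σ_{Q ⊆ K} β_Q ≤ C for all dyadic K, where w(K) = ∫_K w. Then for all g ∈ L²(w): Σ_Q β_Q ⟨g⟩²_{Q,w} ≤ C' ‖g‖²_{L²(w)}, where ⟨g⟩_{Q,w} = (1/w(Q)) ∫_Q g w. -/

import Mathlib

/-- Weighted measure of the dyadic cube of generation `n`, index `k`, for a weight
constant on the `2^N` leaves of the dyadic tree of depth `N`. -/
noncomputable def wMeasure (N : ℕ) (w : ℕ → ℝ) (n k : ℕ) : ℝ :=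
  ((2 : ℝ) ^ N)⁻¹ * ∑ l ∈ Finset.range (2 ^ (N - n)), w (k * 2 ^ (N - n) + l)

/-- Weighted average `⟨g⟩_{Q,w}` over the dyadic cube of generation `n`, index `k`. -/
noncomputable def wAvg (N : ℕ) (w g : ℕ → ℝ) (n k : ℕ) : ℝ :=
  (∑ l ∈ Finset.range (2 ^ (N - n)),
      g (k * 2 ^ (N - n) + l) * w (k * 2 ^ (N - n) + l)) /
    ∑ l ∈ Finset.range (2 ^ (N - n)), w (k * 2 ^ (N - n) + l)

noncomputable def cubeSum (N : ℕ) (f : ℕ → ℝ) (n k : ℕ) : ℝ :=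
  ∑ l ∈ Finset.range (2 ^ (N - n)), f (k * 2 ^ (N - n) + l)

noncomputable def treeSum (N : ℕ) (β : ℕ → ℕ → ℝ) (n k : ℕ) : ℝ :=
  ∑ m ∈ Finset.Icc n N, ∑ l ∈ Finset.range (2 ^ (m - n)), β m (k * 2 ^ (m - n) + l)

lemma cubeSum_split (N : ℕ) (f : ℕ → ℝ) (n k : ℕ) (h : n < N) :
    cubeSum N f n k = cubeSum N f (n + 1) (2 * k) + cubeSum N f (n + 1) (2 * k + 1) := by
  have hd : N - n = (N - (n + 1)) + 1 := by omega
  unfold cubeSum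
  rw [hd, pow_succ, mul_two (2 ^ (N - (n + 1)) : ℕ), Finset.sum_range_add]
  congr 1
  · exact Finset.sum_congr rfl fun l _ => by congr 1; ring
  · exact Finset.sum_congr rfl fun l _ => by congr 1; ring

lemma treeSum_split (N : ℕ) (β : ℕ → ℕ → ℝ) (n k : ℕ) (h : n < N) :
    treeSum N β n k =
      β n k + (treeSum N β (n + 1) (2 * k) + treeSum N β (n + 1) (2 * k + 1)) := by
  unfold treeSum
  have hico : ∀ (a : ℕ), Finset.Icc a N = Finset.Ico a (N + 1) := fun a =>
    (Finset.Ico_add_one_right_eq_Icc a N).symm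
  simp only [hico]
  rw [Finset.sum_Ico_eq_sum_range, Finset.sum_Ico_eq_sum_range,
    Finset.sum_Ico_eq_sum_range]
  have h1 : N + 1 - n = (N + 1 - (n + 1)) + 1 := by omega
  rw [h1, Finset.sum_range_succ']
  have h0 : ∑ l ∈ Finset.range (2 ^ (n + 0 - n)), β (n + 0) (k * 2 ^ (n + 0 - n) + l)
      = β n k := by simp
  rw [h0]
  rw [← Finset.sum_add_distrib]
  rw [add_comm]
  congr 1
  refine Finset.sum_congr rfl fun i _ => ?_
  have hm : n + (i + 1) - n = (n + 1 + i - (n + 1)) + 1 := by omega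
  have hm2 : n + (i + 1) = n + 1 + i := by omega
  rw [hm, hm2, pow_succ, mul_two (2 ^ (n + 1 + i - (n + 1)) : ℕ), Finset.sum_range_add]
  congr 1
  · exact Finset.sum_congr rfl fun l _ => by congr 1; ring
  · exact Finset.sum_congr rfl fun l _ => by congr 1; ring

lemma cubeSum_leaf (N : ℕ) (f : ℕ → ℝ) (k : ℕ) : cubeSum N f N k = f k := by
  simp [cubeSum]

lemma treeSum_leaf (N : ℕ) (β : ℕ → ℕ → ℝ) (k : ℕ) : treeSum N β N k = β N k := by
  simp [treeSum]

lemma cubeSum_pos (N : ℕ) (w : ℕ → ℝ) (hw : ∀ j < 2 ^ N, 0 < w j)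
    (n k : ℕ) (hn : n ≤ N) (hk : k < 2 ^ n) : 0 < cubeSum N w n k := by
  unfold cubeSum
  apply Finset.sum_pos
  · intro l hl
    apply hw
    have hl' : l < 2 ^ (N - n) := Finset.mem_range.mp hl
    calc k * 2 ^ (N - n) + l < (k + 1) * 2 ^ (N - n) := by
          rw [add_mul, one_mul]; omega
      _ ≤ 2 ^ n * 2 ^ (N - n) := by
          apply Nat.mul_le_mul_right; omega
      _ = 2 ^ N := by rw [← pow_add]; congr 1; omega
  · exact ⟨0, Finset.mem_range.mpr (by positivity)⟩

lemma treeSum_nonneg (N : ℕ) (β : ℕ → ℕ → ℝ) (hβ : ∀ n k, 0 ≤ β n k) (n k : ℕ) :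
    0 ≤ treeSum N β n k :=
  Finset.sum_nonneg fun _ _ => Finset.sum_nonneg fun _ _ => hβ _ _

lemma cs_div (a b u v : ℝ) (hu : 0 < u) (hv : 0 < v) :
    (a + b) ^ 2 / (u + v) ≤ a ^ 2 / u + b ^ 2 / v := by
  rw [div_add_div _ _ (ne_of_gt hu) (ne_of_gt hv),
    div_le_div_iff₀ (by positivity) (by positivity)]
  nlinarith [sq_nonneg (a * v - b * u), mul_pos hu hv]

lemma bellman (W₁ W₂ B₁ B₂ b a₁ a₂ : ℝ) (hW₁ : 0 < W₁) (hW₂ : 0 < W₂)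
    (hB₁ : 0 ≤ B₁) (hB₂ : 0 ≤ B₂) (hb : 0 ≤ b)
    (hsum : b + B₁ + B₂ ≤ W₁ + W₂) :
    b * ((a₁ + a₂) / (W₁ + W₂)) ^ 2 +
      4 * ((a₁ + a₂) ^ 2 / (W₁ + W₂ + (b + (B₁ + B₂)))) ≤
      4 * (a₁ ^ 2 / (W₁ + B₁)) + 4 * (a₂ ^ 2 / (W₂ + B₂)) := by
  set W := W₁ + W₂ with hW
  set s := W + B₁ + B₂ with hs
  set t := W + (b + (B₁ + B₂)) with ht
  have hWpos : 0 < W := by positivity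
  have hspos : 0 < s := by simp [hs]; positivity
  have htpos : 0 < t := by simp [ht]; positivity
  have hA : 0 ≤ (a₁ + a₂) ^ 2 := sq_nonneg _
  have hcs : (a₁ + a₂) ^ 2 / s ≤ a₁ ^ 2 / (W₁ + B₁) + a₂ ^ 2 / (W₂ + B₂) := by
    have : s = (W₁ + B₁) + (W₂ + B₂) := by rw [hs, hW]; ring
    rw [this]
    exact cs_div _ _ _ _ (by positivity) (by positivity)
  have key : b * ((a₁ + a₂) / W) ^ 2 + 4 * ((a₁ + a₂) ^ 2 / t) ≤
      4 * ((a₁ + a₂) ^ 2 / s) := by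
    have e1 : 4 * ((a₁ + a₂) ^ 2 / s) - 4 * ((a₁ + a₂) ^ 2 / t) =
        4 * (a₁ + a₂) ^ 2 * b / (s * t) := by
      field_simp
      ring
    have e2 : b * ((a₁ + a₂) / W) ^ 2 ≤ 4 * (a₁ + a₂) ^ 2 * b / (s * t) := by
      rw [div_pow, mul_div_assoc', div_le_div_iff₀ (by positivity) (by positivity)]
      have hst : s * t ≤ (2 * W) * (2 * W) := by
        apply mul_le_mul
        · rw [hs]; linarith
        · rw [ht]; linarith
        · linarith
        · linarith
      nlinarith [mul_nonneg hb hA]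
    linarith
  linarith

lemma core (N : ℕ) (w g : ℕ → ℝ) (hw : ∀ j < 2 ^ N, 0 < w j)
    (β : ℕ → ℕ → ℝ) (hβ : ∀ n k, 0 ≤ β n k)
    (hcar : ∀ n ≤ N, ∀ k < 2 ^ n, treeSum N β n k ≤ cubeSum N w n k) :
    ∀ d n k, n + d = N → k < 2 ^ n →
      treeSum N (fun m j => β m j * (wAvg N w g m j) ^ 2) n k ≤
        4 * (cubeSum N (fun j => g j ^ 2 * w j) n k -
          (cubeSum N (fun j => g j * w j) n k) ^ 2
            / (cubeSum N w n k + treeSum N β n k)) := by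
  intro d
  induction d with
  | zero =>
    intro n k hn hk
    have hnN : n = N := by omega
    subst hnN
    rw [treeSum_leaf, treeSum_leaf, cubeSum_leaf, cubeSum_leaf, cubeSum_leaf]
    have hwk : 0 < w k := hw k hk
    have havg : wAvg n w g n k = g k := by
      unfold wAvg
      simp [mul_div_assoc, div_self (ne_of_gt hwk)]
    rw [havg]
    have hcar' : β n k ≤ w k := by
      have := hcar n le_rfl k hk
      rwa [treeSum_leaf, cubeSum_leaf] at this
    have hb : 0 ≤ β n k := hβ n k
    have hpos : 0 < w k + β n k := by linarith
    have h1 : (g k * w k) ^ 2 / (w k + β n k) ≤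
        g k ^ 2 * w k - β n k * g k ^ 2 / 4 := by
      rw [div_le_iff₀ hpos]
      nlinarith [mul_nonneg (mul_nonneg hb (sub_nonneg.2 hcar')) (sq_nonneg (g k))]
    linarith
  | succ d ih =>
    intro n k hn hk
    have hnN : n < N := by omega
    have hk1 : 2 * k < 2 ^ (n + 1) := by rw [pow_succ]; omega
    have hk2 : 2 * k + 1 < 2 ^ (n + 1) := by rw [pow_succ]; omega
    have ih1 := ih (n + 1) (2 * k) (by omega) hk1
    have ih2 := ih (n + 1) (2 * k + 1) (by omega) hk2
    rw [treeSum_split N _ n k hnN, treeSum_split N β n k hnN,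
      cubeSum_split N _ n k hnN, cubeSum_split N (fun j => g j * w j) n k hnN,
      cubeSum_split N w n k hnN]
    set W₁ := cubeSum N w (n + 1) (2 * k)
    set W₂ := cubeSum N w (n + 1) (2 * k + 1)
    set B₁ := treeSum N β (n + 1) (2 * k)
    set B₂ := treeSum N β (n + 1) (2 * k + 1)
    set A₁ := cubeSum N (fun j => g j * w j) (n + 1) (2 * k)
    set A₂ := cubeSum N (fun j => g j * w j) (n + 1) (2 * k + 1)
    have hW₁ : 0 < W₁ := cubeSum_pos N w hw (n + 1) (2 * k) (by omega) hk1
    have hW₂ : 0 < W₂ := cubeSum_pos N w hw (n + 1) (2 * k + 1) (by omega) hk2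
    have hB₁ : 0 ≤ B₁ := treeSum_nonneg N β hβ _ _
    have hB₂ : 0 ≤ B₂ := treeSum_nonneg N β hβ _ _
    have hb : 0 ≤ β n k := hβ n k
    have hcarn := hcar n (by omega) k hk
    rw [treeSum_split N β n k hnN, cubeSum_split N w n k hnN] at hcarn
    have havg : wAvg N w g n k = (A₁ + A₂) / (W₁ + W₂) := by
      unfold wAvg
      rw [show (∑ l ∈ Finset.range (2 ^ (N - n)),
          g (k * 2 ^ (N - n) + l) * w (k * 2 ^ (N - n) + l)) =
          cubeSum N (fun j => g j * w j) n k from rfl,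
        show (∑ l ∈ Finset.range (2 ^ (N - n)), w (k * 2 ^ (N - n) + l)) =
          cubeSum N w n k from rfl,
        cubeSum_split N (fun j => g j * w j) n k hnN, cubeSum_split N w n k hnN]
    rw [havg]
    have hbell := bellman W₁ W₂ B₁ B₂ (β n k) A₁ A₂ hW₁ hW₂ hB₁ hB₂ hb (by linarith)
    linarith

lemma treeSum_zero (N : ℕ) (X : ℕ → ℕ → ℝ) :
    treeSum N X 0 0 = ∑ n ∈ Finset.range (N + 1), ∑ k ∈ Finset.range (2 ^ n), X n k := by
  unfold treeSum
  rw [← Finset.Ico_add_one_right_eq_Icc, ← Finset.range_eq_Ico]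
  simp

lemma cubeSum_zero (N : ℕ) (f : ℕ → ℝ) :
    cubeSum N f 0 0 = ∑ l ∈ Finset.range (2 ^ N), f l := by
  simp [cubeSum]

lemma treeSum_smul (N : ℕ) (c : ℝ) (X : ℕ → ℕ → ℝ) (n k : ℕ) :
    treeSum N (fun m j => c * X m j) n k = c * treeSum N X n k := by
  simp [treeSum, Finset.mul_sum]

lemma single_le_treeSum (N : ℕ) (β : ℕ → ℕ → ℝ) (hβ : ∀ n k, 0 ≤ β n k)
    (n k : ℕ) (hn : n ≤ N) : β n k ≤ treeSum N β n k := by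
  unfold treeSum
  have h1 : (∑ l ∈ Finset.range (2 ^ (n - n)), β n (k * 2 ^ (n - n) + l)) = β n k := by
    simp
  calc β n k = ∑ l ∈ Finset.range (2 ^ (n - n)), β n (k * 2 ^ (n - n) + l) := h1.symm
    _ ≤ _ := Finset.single_le_sum (f := fun m => ∑ l ∈ Finset.range (2 ^ (m - n)),
        β m (k * 2 ^ (m - n) + l))
        (fun m _ => Finset.sum_nonneg fun l _ => hβ _ _)
        (Finset.mem_Icc.mpr ⟨le_rfl, hn⟩)

/-- finite dyadic version: weighted scalar Carleson embedding: if
`(1/w(K)) Σ_{Q ⊆ K} β_Q ≤ C` for all dyadic `K`, then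
`Σ_Q β_Q ⟨g⟩²_{Q,w} ≤ C' ‖g‖²_{L²(w)}`. -/
theorem weighted_carleson_embedding :
    ∀ C : ℝ, 0 ≤ C → ∃ C' : ℝ,
    ∀ (N : ℕ) (w : ℕ → ℝ), (∀ j < 2 ^ N, 0 < w j) →
    ∀ (β : ℕ → ℕ → ℝ), (∀ n k, 0 ≤ β n k) →
    (∀ n ≤ N, ∀ k < 2 ^ n,
      (wMeasure N w n k)⁻¹ * ∑ m ∈ Finset.Icc n N, ∑ l ∈ Finset.range (2 ^ (m - n)),
        β m (k * 2 ^ (m - n) + l) ≤ C) →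
    ∀ g : ℕ → ℝ,
      ∑ n ∈ Finset.range (N + 1), ∑ k ∈ Finset.range (2 ^ n),
          β n k * (wAvg N w g n k) ^ 2 ≤
        C' * (((2 : ℝ) ^ N)⁻¹ * ∑ l ∈ Finset.range (2 ^ N), g l ^ 2 * w l) := by
  intro C hC
  refine ⟨4 * C, ?_⟩
  intro N w hw β hβ hcar g
  have h2N : (0 : ℝ) < (2 : ℝ) ^ N := by positivity
  -- translate the Carleson hypothesis
  have hcar' : ∀ n ≤ N, ∀ k < 2 ^ n,
      treeSum N β n k ≤ C * ((2 : ℝ) ^ N)⁻¹ * cubeSum N w n k := by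
    intro n hn k hk
    have hW : 0 < cubeSum N w n k := cubeSum_pos N w hw n k hn hk
    have hwm : wMeasure N w n k = ((2 : ℝ) ^ N)⁻¹ * cubeSum N w n k := rfl
    have := hcar n hn k hk
    rw [show (∑ m ∈ Finset.Icc n N, ∑ l ∈ Finset.range (2 ^ (m - n)),
        β m (k * 2 ^ (m - n) + l)) = treeSum N β n k from rfl, hwm] at this
    have hpos : 0 < ((2 : ℝ) ^ N)⁻¹ * cubeSum N w n k := by positivity
    rw [inv_mul_le_iff₀ hpos] at this
    linarith [this]
  by_cases hC0 : C = 0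
  · -- all β vanish on the relevant range
    subst hC0
    have hz : ∀ n ≤ N, ∀ k < 2 ^ n, β n k = 0 := by
      intro n hn k hk
      have h1 := hcar' n hn k hk
      have h2 := single_le_treeSum N β hβ n k hn
      have h3 := hβ n k
      simp only [zero_mul] at h1
      linarith
    have : ∑ n ∈ Finset.range (N + 1), ∑ k ∈ Finset.range (2 ^ n),
        β n k * (wAvg N w g n k) ^ 2 = 0 := by
      apply Finset.sum_eq_zero
      intro n hn
      apply Finset.sum_eq_zero
      intro k hk
      rw [hz n (Nat.lt_succ_iff.mp (Finset.mem_range.mp hn)) k (Finset.mem_range.mp hk)]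
      ring
    rw [this]
    simp
  · have hCpos : 0 < C := lt_of_le_of_ne hC (Ne.symm hC0)
    set β' : ℕ → ℕ → ℝ := fun m j => ((2 : ℝ) ^ N / C) * β m j with hβ'def
    have hβ' : ∀ n k, 0 ≤ β' n k := fun n k => by
      have := hβ n k; positivity
    have hcar'' : ∀ n ≤ N, ∀ k < 2 ^ n, treeSum N β' n k ≤ cubeSum N w n k := by
      intro n hn k hk
      rw [hβ'def, treeSum_smul]
      have h1 := hcar' n hn k hk
      rw [div_mul_eq_mul_div, div_le_iff₀ hCpos]
      calc (2:ℝ) ^ N * treeSum N β n k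
          ≤ (2:ℝ) ^ N * (C * ((2 : ℝ) ^ N)⁻¹ * cubeSum N w n k) := by
            apply mul_le_mul_of_nonneg_left h1 (le_of_lt h2N)
        _ = cubeSum N w n k * C := by field_simp
    have hcore := core N w g hw β' hβ' hcar'' N 0 0 (by omega) (by norm_num)
    have hWB : 0 < cubeSum N w 0 0 + treeSum N β' 0 0 := by
      have := cubeSum_pos N w hw 0 0 (by omega) (by norm_num)
      have := treeSum_nonneg N β' hβ' 0 0
      linarith
    have hdrop : treeSum N (fun m j => β' m j * (wAvg N w g m j) ^ 2) 0 0 ≤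
        4 * cubeSum N (fun j => g j ^ 2 * w j) 0 0 := by
      have hq : 0 ≤ (cubeSum N (fun j => g j * w j) 0 0) ^ 2 /
          (cubeSum N w 0 0 + treeSum N β' 0 0) := by positivity
      linarith
    -- rewrite the goal sum as a treeSum
    have hgoal : ∑ n ∈ Finset.range (N + 1), ∑ k ∈ Finset.range (2 ^ n),
        β n k * (wAvg N w g n k) ^ 2 =
        (C / (2 : ℝ) ^ N) * treeSum N (fun m j => β' m j * (wAvg N w g m j) ^ 2) 0 0 := by
      have : (fun (m j : ℕ) => β' m j * (wAvg N w g m j) ^ 2) =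
          fun m j => ((2 : ℝ) ^ N / C) * (β m j * (wAvg N w g m j) ^ 2) := by
        funext m j; rw [hβ'def]; ring
      rw [this, treeSum_smul, treeSum_zero]
      field_simp
    rw [hgoal]
    have h1 : (C / (2 : ℝ) ^ N) * treeSum N (fun m j => β' m j * (wAvg N w g m j) ^ 2) 0 0
        ≤ (C / (2 : ℝ) ^ N) * (4 * cubeSum N (fun j => g j ^ 2 * w j) 0 0) := by
      apply mul_le_mul_of_nonneg_left hdrop (by positivity)
    calc (C / (2 : ℝ) ^ N) * treeSum N (fun m j => β' m j * (wAvg N w g m j) ^ 2) 0 0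
        ≤ (C / (2 : ℝ) ^ N) * (4 * cubeSum N (fun j => g j ^ 2 * w j) 0 0) := h1
      _ = 4 * C * (((2 : ℝ) ^ N)⁻¹ * ∑ l ∈ Finset.range (2 ^ N), g l ^ 2 * w l) := by
          rw [cubeSum_zero]
          field_simp
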